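/- For every ε with 0 < ε < 1/2 and every positive integer n, there exists a closed subset E of ∂T such that cap^T(E) ≥ ε and cap^T_n(E) ≤ ε/(1 − 2ε). -/

import Mathlib

/-! Take for `E` the boundary points whose digits vanish on a gap `n ≤ i < n + j`. It is
spherically symmetric: under the uniform measure `μ` on `E`, each vertex of `E` at level `k` has
mass `m k = 2^{-f(k)}`, `f(k)` being the number of free digits below `k`. Integrating `Iφ ≥ 1`
against `μ` gives `Σ_x φ(x) μ(x) ≥ 1`, and Cauchy–Schwarz with `Σ_x μ(x)² = Σ_k m k` yields
`cap^T(E) ≥ (Σ_k m k)⁻¹`; conversely the test function `φ ∝ μ` on the levels `≥ n` yields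
`cap^T_n(E) ≤ (Σ_{k ≥ n} m k)⁻¹`. The first `n` levels contribute `2 - 2·2^{-n}` to the first
sum only and the gap contributes `j·2^{-n}` to both, so `Σ_k m k = 2 + j·2^{-n}` while
`Σ_{k ≥ n} m k = (j + 2)·2^{-n}`; `j ≈ 2^n (1 - 2ε)/ε` gives both estimates. -/

open scoped ENNReal NNReal
open Filter Topology

noncomputable section

/-- The vertex set of the dyadic tree `T`: finite binary strings. The boundary `∂T`
is the set of infinite binary sequences `ℕ → Bool`. `pre ζ k` is the prefix of
length `k` of the boundary point `ζ`. -/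
def pre (ζ : ℕ → Bool) (k : ℕ) : List Bool := List.ofFn (fun i : Fin k => ζ i)

/-- The tree condenser capacity `cap^T_n(E)`: the infimum of `Σ_x φ(x)²` over
`φ : T → [0,∞)` with `Iφ(ζ) = Σ_{x ∈ P(ζ)} φ(x) ≥ 1` on `E` and `φ(x) = 0`
whenever `d(x) ≤ n-1`.  For `n = 0` this is the tree capacity `cap^T(E)`. -/
noncomputable def treeCapN (n : ℕ) (E : Set (ℕ → Bool)) : ℝ≥0∞ :=
  sInf { c | ∃ φ : List Bool → ℝ≥0,
    (∀ ζ ∈ E, 1 ≤ ∑' k : ℕ, (φ (pre ζ k) : ℝ≥0∞)) ∧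
    (∀ x : List Bool, x.length < n → φ x = 0) ∧
    c = ∑' x : List Bool, (φ x : ℝ≥0∞) ^ 2 }

/-- The tree capacity `cap^T(E)` of a set `E ⊆ ∂T`. -/
noncomputable def treeCap (E : Set (ℕ → Bool)) : ℝ≥0∞ := treeCapN 0 E

open MeasureTheory

theorem tsum_list_eq_tsum_sum_ofFn {α : Type*} [Fintype α] (f : List α → ℝ≥0∞) :
    ∑' x, f x = ∑' k, ∑ b : Fin k → α, f (List.ofFn b) := by
  rw [← (List.equivSigmaTuple (α := α)).symm.tsum_eq, ENNReal.tsum_sigma']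
  exact tsum_congr fun k => tsum_fintype _

theorem tsum_ite_le_eq_tsum_add (f : ℕ → ℝ≥0∞) (n : ℕ) :
    ∑' k, (if n ≤ k then f k else 0) = ∑' k, f (k + n) := by
  rw [← ENNReal.summable.sum_add_tsum_nat_add' (k := n)]
  simp +contextual [Finset.sum_eq_zero, Nat.not_le.mpr]

theorem sum_range_inv_two_pow_add (n : ℕ) :
    ∑ k ∈ Finset.range n, (2⁻¹ : ℝ≥0∞) ^ k + 2 * 2⁻¹ ^ n = 2 := by
  induction n with
  | zero => simp
  | succ n ih =>
    rw [Finset.sum_range_succ, pow_succ', ← mul_assoc,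
      ENNReal.mul_inv_cancel two_ne_zero ENNReal.ofNat_ne_top, one_mul, add_assoc, ← two_mul, ih]

theorem ENNReal.two_mul_le_add_sq (a b : ℝ≥0∞) : 2 * a * b ≤ a ^ 2 + b ^ 2 := by
  rcases eq_or_ne a ⊤ with rfl | ha
  · simp
  rcases eq_or_ne b ⊤ with rfl | hb
  · simp
  lift a to ℝ≥0 using ha
  lift b to ℝ≥0 using hb
  exact_mod_cast _root_.two_mul_le_add_sq a b

theorem ENNReal.inv_tsum_sq_le_tsum_sq {ι : Type*} {w φ : ι → ℝ≥0∞}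
    (h : 1 ≤ ∑' i, w i * φ i) : (∑' i, w i ^ 2)⁻¹ ≤ ∑' i, φ i ^ 2 := by
  set R := ∑' i, w i ^ 2
  rcases eq_or_ne R ⊤ with hR | hR
  · simp [hR]
  have hR0 : R ≠ 0 := by
    intro hR0
    have hw : ∀ i, w i = 0 := fun i =>
      (pow_eq_zero_iff two_ne_zero).mp (ENNReal.tsum_eq_zero.mp hR0 i)
    simp [hw] at h
  have he : R⁻¹ ≠ ⊤ := ENNReal.inv_ne_top.mpr hR0
  refine ENNReal.le_of_add_le_add_right he ?_
  -- `2ab ≤ a² + b²` with `a = R⁻¹ w i`, `b = φ i`, summed over `i`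
  calc R⁻¹ + R⁻¹ = 2 * R⁻¹ * 1 := by rw [mul_one, two_mul]
    _ ≤ 2 * R⁻¹ * ∑' i, w i * φ i := by gcongr
    _ = ∑' i, 2 * (R⁻¹ * w i) * φ i := by
        rw [← ENNReal.tsum_mul_left]
        exact tsum_congr fun i => by ring
    _ ≤ ∑' i, ((R⁻¹ * w i) ^ 2 + φ i ^ 2) :=
        ENNReal.tsum_le_tsum fun i => ENNReal.two_mul_le_add_sq _ _
    _ = R⁻¹ * (R⁻¹ * R) + ∑' i, φ i ^ 2 := by
        rw [ENNReal.tsum_add]; simp_rw [mul_pow, ENNReal.tsum_mul_left]; rw [sq, mul_assoc]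
    _ = ∑' i, φ i ^ 2 + R⁻¹ := by rw [ENNReal.inv_mul_cancel hR0 hR, mul_one, add_comm]

section

variable (S : Set ℕ)

def supportedBoundary : Set (ℕ → Bool) := {ζ | ∀ i ∉ S, ζ i = false}

theorem isClosed_supportedBoundary : IsClosed (supportedBoundary S) := by
  simp only [supportedBoundary, Set.ofPred_forall]
  exact isClosed_iInter fun i => isClosed_iInter fun _ =>
    isClosed_eq (continuous_apply i) continuous_const

variable [DecidablePred (· ∈ S)]

def coordPMF (i : ℕ) : PMF Bool := if i ∈ S then PMF.uniformOfFintype Bool else PMF.pure false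

def uniformBoundaryMeasure : Measure (ℕ → Bool) :=
  Measure.infinitePi fun i => (coordPMF S i).toMeasure

def cylMass (x : List Bool) : ℝ≥0∞ :=
  ∏ i ∈ Finset.range x.length, coordPMF S i (x.getD i false)

def levelMass (k : ℕ) : ℝ≥0∞ := ∏ i ∈ Finset.range k, if i ∈ S then 2⁻¹ else 1

theorem levelMass_succ (k : ℕ) :
    levelMass S (k + 1) = levelMass S k * if k ∈ S then 2⁻¹ else 1 :=
  Finset.prod_range_succ _ _

theorem cylMass_ne_top (x : List Bool) : cylMass S x ≠ ⊤ :=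
  ENNReal.prod_ne_top fun _ _ => PMF.apply_ne_top _ _

theorem levelMass_ne_zero (k : ℕ) : levelMass S k ≠ 0 :=
  Finset.prod_ne_zero_iff.mpr fun _ _ => by split_ifs <;> simp

theorem cylMass_ofFn {k : ℕ} (b : Fin k → Bool) :
    cylMass S (List.ofFn b) = ∏ i : Fin k, coordPMF S i (b i) := by
  rw [cylMass, List.length_ofFn, ← Fin.prod_univ_eq_prod_range (fun i => coordPMF S i _)]
  simp

theorem sum_coordPMF_sq (i : ℕ) : ∑ c, coordPMF S i c ^ 2 = if i ∈ S then 2⁻¹ else 1 := by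
  unfold coordPMF
  split_ifs
  · simp only [PMF.uniformOfFintype_apply, Fintype.card_bool, Nat.cast_ofNat, Fintype.sum_bool]
    rw [← two_mul, sq, ← mul_assoc, ENNReal.mul_inv_cancel two_ne_zero ENNReal.ofNat_ne_top,
      one_mul]
  · simp [PMF.pure_apply]

theorem sum_cylMass_ofFn_sq (k : ℕ) :
    ∑ b : Fin k → Bool, cylMass S (List.ofFn b) ^ 2 = levelMass S k := by
  simp_rw [cylMass_ofFn, ← Finset.prod_pow]
  rw [← Fintype.prod_sum (fun (i : Fin k) c => coordPMF S i c ^ 2)]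
  simp_rw [sum_coordPMF_sq]
  exact Fin.prod_univ_eq_prod_range (fun i => if i ∈ S then (2⁻¹ : ℝ≥0∞) else 1) k

theorem tsum_cylMass_sq : ∑' x, cylMass S x ^ 2 = ∑' k, levelMass S k := by
  rw [tsum_list_eq_tsum_sum_ofFn]
  simp_rw [sum_cylMass_ofFn_sq]

theorem cylMass_pre {ζ : ℕ → Bool} (hζ : ζ ∈ supportedBoundary S) (k : ℕ) :
    cylMass S (pre ζ k) = levelMass S k := by
  rw [pre, cylMass_ofFn, levelMass, ← Fin.prod_univ_eq_prod_range]
  congr! with i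
  unfold coordPMF
  split_ifs with h
  · simp [PMF.uniformOfFintype_apply]
  · simp [hζ i h]

theorem uniformBoundaryMeasure_restrict_preimage {k : ℕ} (b : Fin k → Bool) :
    uniformBoundaryMeasure S ((fun ζ (i : Fin k) => ζ i) ⁻¹' {b}) =
      cylMass S (List.ofFn b) := by
  have : (fun ζ (i : Fin k) => ζ i) ⁻¹' {b} =
      Set.pi (Finset.range k : Finset ℕ) fun i => {(List.ofFn b).getD i false} := by
    ext ζ
    simp +contextual [funext_iff, Fin.forall_iff]
  rw [this, uniformBoundaryMeasure, Measure.infinitePi_pi _ fun _ _ => measurableSet_singleton _,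
    cylMass, List.length_ofFn]
  simp

theorem lintegral_comp_pre (g : List Bool → ℝ≥0∞) (k : ℕ) :
    ∫⁻ ζ, g (pre ζ k) ∂uniformBoundaryMeasure S =
      ∑ b : Fin k → Bool, g (List.ofFn b) * cylMass S (List.ofFn b) := by
  have hπ : Measurable fun (ζ : ℕ → Bool) (i : Fin k) => ζ i := by fun_prop
  calc ∫⁻ ζ, g (pre ζ k) ∂uniformBoundaryMeasure S
      = ∫⁻ b, g (List.ofFn b) ∂(uniformBoundaryMeasure S).map fun ζ (i : Fin k) => ζ i :=
        (lintegral_map (f := fun b => g (List.ofFn b)) (measurable_of_countable _) hπ).symm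
    _ = _ := by
      rw [lintegral_fintype]
      congr! with b
      rw [Measure.map_apply hπ (measurableSet_singleton b),
        uniformBoundaryMeasure_restrict_preimage]

theorem lintegral_tsum_comp_pre (φ : List Bool → ℝ≥0∞) :
    ∫⁻ ζ, ∑' k, φ (pre ζ k) ∂uniformBoundaryMeasure S = ∑' x, φ x * cylMass S x := by
  rw [lintegral_tsum fun k => ?_, tsum_list_eq_tsum_sum_ofFn]
  · simp_rw [lintegral_comp_pre]
  · exact ((measurable_of_countable fun b : Fin k → Bool => φ (List.ofFn b)).comp
      (by fun_prop)).aemeasurable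

theorem ae_mem_supportedBoundary :
    ∀ᵐ ζ ∂uniformBoundaryMeasure S, ζ ∈ supportedBoundary S := by
  simp only [supportedBoundary, Set.mem_ofPred_eq, ae_all_iff]
  intro i hi
  rw [ae_iff]
  have : {ζ : ℕ → Bool | ¬ζ i = false} = Function.eval i ⁻¹' ({true} : Set Bool) := by ext; simp
  rw [this, uniformBoundaryMeasure, (measurePreserving_eval_infinitePi _ i).measure_preimage
    (measurableSet_singleton _).nullMeasurableSet, PMF.toMeasure_apply_singleton _ _
    (measurableSet_singleton _), coordPMF, if_neg hi, PMF.pure_apply, if_neg (by decide)]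

theorem one_le_tsum_mul_cylMass (φ : List Bool → ℝ≥0∞)
    (hφ : ∀ ζ ∈ supportedBoundary S, 1 ≤ ∑' k, φ (pre ζ k)) :
    1 ≤ ∑' x, φ x * cylMass S x := by
  calc 1 = ∫⁻ _, 1 ∂uniformBoundaryMeasure S := by simp [uniformBoundaryMeasure]
    _ ≤ ∫⁻ ζ, ∑' k, φ (pre ζ k) ∂uniformBoundaryMeasure S :=
      lintegral_mono_ae ((ae_mem_supportedBoundary S).mono hφ)
    _ = _ := lintegral_tsum_comp_pre S φ

theorem inv_tsum_levelMass_le_treeCap :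
    (∑' k, levelMass S k)⁻¹ ≤ treeCap (supportedBoundary S) := by
  refine le_sInf ?_
  rintro _ ⟨φ, hφ, -, rfl⟩
  rw [← tsum_cylMass_sq]
  refine ENNReal.inv_tsum_sq_le_tsum_sq ?_
  simpa only [mul_comm] using one_le_tsum_mul_cylMass S (fun x => φ x) hφ

theorem treeCapN_supportedBoundary_le (n : ℕ) (h : ∑' k, levelMass S (k + n) ≠ ⊤) :
    treeCapN n (supportedBoundary S) ≤ (∑' k, levelMass S (k + n))⁻¹ := by
  set R := ∑' k, levelMass S (k + n)
  have hR : R ≠ 0 := fun h0 => levelMass_ne_zero S (0 + n) (ENNReal.tsum_eq_zero.mp h0 0)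
  set ψ : List Bool → ℝ≥0∞ := fun x => if n ≤ x.length then R⁻¹ * cylMass S x else 0
  have hψ : ∀ x, ψ x ≠ ⊤ := fun x => by
    simp only [ψ]; split_ifs
    · exact ENNReal.mul_ne_top (ENNReal.inv_ne_top.mpr hR) (cylMass_ne_top S x)
    · exact ENNReal.zero_ne_top
  refine sInf_le ⟨fun x => (ψ x).toNNReal, fun ζ hζ => ?_, fun x hx => ?_, ?_⟩
  · simp only [ENNReal.coe_toNNReal (hψ _)]
    have hlen : ∀ k, (pre ζ k).length = k := fun k => List.length_ofFn
    simp only [ψ, hlen, cylMass_pre S hζ]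
    rw [tsum_ite_le_eq_tsum_add (fun k => R⁻¹ * levelMass S k), ENNReal.tsum_mul_left,
      ENNReal.inv_mul_cancel hR h]
  · simp [ψ, Nat.not_le.mpr hx]
  · have hlevel : ∀ k, ∑ b : Fin k → Bool, ψ (List.ofFn b) ^ 2 =
        if n ≤ k then R⁻¹ ^ 2 * levelMass S k else 0 := fun k => by
      simp only [ψ, List.length_ofFn]
      split_ifs
      · simp_rw [mul_pow, ← Finset.mul_sum, sum_cylMass_ofFn_sq]
      · simp
    simp only [ENNReal.coe_toNNReal (hψ _)]
    rw [tsum_list_eq_tsum_sum_ofFn]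
    simp_rw [hlevel]
    rw [tsum_ite_le_eq_tsum_add (fun k => R⁻¹ ^ 2 * levelMass S k), ENNReal.tsum_mul_left, sq,
      mul_assoc, ENNReal.inv_mul_cancel hR h, mul_one]

end

section gap

variable {n j : ℕ}

theorem levelMass_gap_of_le {k : ℕ} (hk : k ≤ n) :
    levelMass (Set.Ico n (n + j))ᶜ k = 2⁻¹ ^ k := by
  induction k with
  | zero => simp [levelMass]
  | succ k ih =>
    rw [levelMass_succ, ih (by omega), if_pos (by simp; omega), pow_succ]

theorem levelMass_gap_add_of_le {k : ℕ} (hk : k ≤ j) :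
    levelMass (Set.Ico n (n + j))ᶜ (k + n) = 2⁻¹ ^ n := by
  induction k with
  | zero => rw [zero_add, levelMass_gap_of_le le_rfl]
  | succ k ih =>
    rw [add_right_comm, levelMass_succ, ih (by omega), if_neg (by simp; omega), mul_one]

theorem levelMass_gap_add_add (l : ℕ) :
    levelMass (Set.Ico n (n + j))ᶜ (l + j + n) = 2⁻¹ ^ l * 2⁻¹ ^ n := by
  induction l with
  | zero => rw [zero_add, levelMass_gap_add_of_le le_rfl, pow_zero, one_mul]
  | succ l ih =>
    rw [show l + 1 + j + n = l + j + n + 1 by omega, levelMass_succ, ih, if_pos (by simp; omega),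
      pow_succ]
    ring

theorem tsum_levelMass_gap_add :
    ∑' k, levelMass (Set.Ico n (n + j))ᶜ (k + n) = (j + 2) * 2⁻¹ ^ n := by
  rw [← ENNReal.summable.sum_add_tsum_nat_add' (k := j),
    Finset.sum_congr rfl fun k hk => levelMass_gap_add_of_le (Finset.mem_range.mp hk).le]
  simp_rw [levelMass_gap_add_add]
  rw [ENNReal.tsum_mul_right, ENNReal.tsum_geometric, ENNReal.one_sub_inv_two, inv_inv,
    Finset.sum_const, Finset.card_range, nsmul_eq_mul]
  ring

theorem tsum_levelMass_gap :
    ∑' k, levelMass (Set.Ico n (n + j))ᶜ k = 2 + j * 2⁻¹ ^ n := by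
  rw [← ENNReal.summable.sum_add_tsum_nat_add' (k := n), tsum_levelMass_gap_add,
    Finset.sum_congr rfl fun k hk => levelMass_gap_of_le (Finset.mem_range.mp hk).le,
    add_mul, add_comm ((j : ℝ≥0∞) * _), ← add_assoc, sum_range_inv_two_pow_add]

end gap

theorem exists_nat_capacity_bounds {ε τ : ℝ} (h0 : 0 < ε) (h1 : ε < 1 / 2) (hτ : 0 < τ) :
    ∃ j : ℕ, ε ≤ (2 + j * τ)⁻¹ ∧ ((j + 2) * τ)⁻¹ ≤ ε / (1 - 2 * ε) := by
  have hxε : (1 - 2 * ε) / ε = ε⁻¹ - 2 := by field_simp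
  set x := (1 - 2 * ε) / ε
  have hx : 0 < x := div_pos (by linarith) h0
  refine ⟨⌊x / τ⌋₊, ?_, ?_⟩
  · have hj : ⌊x / τ⌋₊ * τ ≤ x := (le_div_iff₀ hτ).mp (Nat.floor_le (by positivity))
    rw [le_inv_comm₀ h0 (by positivity)]
    linarith
  · have hj : x ≤ (⌊x / τ⌋₊ + 2) * τ := by
      have := (div_lt_iff₀ hτ).mp (Nat.lt_floor_add_one (x / τ))
      nlinarith
    exact (inv_anti₀ hx hj).trans_eq (inv_div _ _)

theorem tree_no_asymptotic_blowup (ε : ℝ) (h0 : 0 < ε) (h1 : ε < 1/2)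
    (n : ℕ) :
    ∃ E : Set (ℕ → Bool), IsClosed E ∧
      ENNReal.ofReal ε ≤ treeCap E ∧
      treeCapN n E ≤ ENNReal.ofReal (ε / (1 - 2 * ε)) := by
  obtain ⟨j, hcap, hcapN⟩ :=
    exists_nat_capacity_bounds h0 h1 (by positivity : (0 : ℝ) < 2⁻¹ ^ n)
  have hτ : (2⁻¹ : ℝ≥0∞) ^ n = ENNReal.ofReal (2⁻¹ ^ n) := by
    rw [ENNReal.ofReal_pow (by norm_num), ENNReal.ofReal_inv_of_pos two_pos,
      ENNReal.ofReal_ofNat]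
  refine ⟨supportedBoundary (Set.Ico n (n + j))ᶜ, isClosed_supportedBoundary _, ?_, ?_⟩
  · calc ENNReal.ofReal ε ≤ ENNReal.ofReal (2 + j * 2⁻¹ ^ n)⁻¹ := ENNReal.ofReal_le_ofReal hcap
      _ = (∑' k, levelMass (Set.Ico n (n + j))ᶜ k)⁻¹ := by
        rw [tsum_levelMass_gap, ENNReal.ofReal_inv_of_pos (by positivity), hτ,
          ENNReal.ofReal_add (by norm_num) (by positivity), ENNReal.ofReal_mul (by positivity),
          ENNReal.ofReal_natCast, ENNReal.ofReal_ofNat]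
      _ ≤ treeCap _ := inv_tsum_levelMass_le_treeCap _
  · calc treeCapN n _ ≤ (∑' k, levelMass (Set.Ico n (n + j))ᶜ (k + n))⁻¹ :=
          treeCapN_supportedBoundary_le _ n (by rw [tsum_levelMass_gap_add]; finiteness)
      _ = ENNReal.ofReal ((j + 2) * 2⁻¹ ^ n)⁻¹ := by
        rw [tsum_levelMass_gap_add, ENNReal.ofReal_inv_of_pos (by positivity), hτ,
          ENNReal.ofReal_mul (by positivity), ENNReal.ofReal_add (by positivity) (by norm_num),
          ENNReal.ofReal_natCast, ENNReal.ofReal_ofNat]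
      _ ≤ _ := ENNReal.ofReal_le_ofReal hcapN
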